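/- arXiv:1808.07536 — 3 statements merged into one kernel-verified Lean document; each statement's English description precedes it below -/
import Mathlib

section
/- For integers N ≥ 2, K ≥ 1, any k, k' ∈ {0,...,K-1}, any n ∈ ZMod N, and any query q in the query set Q_n = {q ∈ (ZMod N)^K : ∑ q_i = n}, the number of keys F ∈ (ZMod N)^{K-1} with φ_n(k, F) = q equals the number of keys F with φ_n(k', F) = q (both equal 1). Hence under a uniform key the query distribution at each server is independent of the requested message index, establishing privacy of the N-ary-indexed PIR code. -/
lemma pir_aux (N K : ℕ) [NeZero N] (n : ZMod N) (k : Fin (K + 1))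
    (q : Fin (K + 1) → ZMod N) (hq : ∑ i, q i = n) :
    Fintype.card {F : Fin K → ZMod N // Fin.insertNth k (n - ∑ i, F i) F = q} = 1 := by
  rw [Fintype.card_eq_one_iff]
  have hsum : ∑ i, q (k.succAbove i) = n - q k := by
    refine eq_sub_of_add_eq' ?_
    rw [← Fin.sum_univ_succAbove q k]; exact hq
  refine ⟨⟨fun i => q (k.succAbove i), ?_⟩, ?_⟩
  · rw [hsum]
    have : n - (n - q k) = q k := by ring
    rw [this]
    exact Fin.insertNth_self_removeNth k q
  · rintro ⟨F, hF⟩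
    have hFi : ∀ i, F i = q (k.succAbove i) := fun i => by
      rw [← hF, Fin.insertNth_apply_succAbove]
    exact Subtype.ext (funext fun i => hFi i)

/-- Privacy of the N-ary-indexed PIR code: for any query `q` in the query set of server `n`,
the number of keys mapping to `q` when requesting message `k` equals the number when
requesting message `k'`, and both equal 1. -/
theorem pir_privacy (N K : ℕ) [NeZero N] (hN : 2 ≤ N) (n : ZMod N) (k k' : Fin (K + 1))
    (q : Fin (K + 1) → ZMod N) (hq : ∑ i, q i = n) :
    Fintype.card {F : Fin K → ZMod N // Fin.insertNth k (n - ∑ i, F i) F = q} = 1 ∧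
    Fintype.card {F : Fin K → ZMod N // Fin.insertNth k' (n - ∑ i, F i) F = q} = 1 :=
  ⟨pir_aux N K n k q hq, pir_aux N K n k' q hq⟩
end

section
/- Let G be a finite abelian group and let W be a uniform random variable on a finite set S. Suppose f₀,...,f_{m-1} : S → G are functions such that the random variables f₀(W),...,f_{m-1}(W) are mutually independent and each f_i either induces the uniform distribution on G or is constant. If at most one of the f_i is constant, then |S| ≥ |G|^{m-1}. (This is the counting core of the minimum-message-size converse: the message size must be at least (N-1)·log|Y|.) -/
/-!
Evaluate the independence identity at the point `x = (f i s₀)ᵢ` attained by some `s₀ ∈ S`, so that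
the joint fibre is nonempty and `|S|^(m-1) ≤ ∏ᵢ |f i ⁻¹' {x i}|`. A uniform `f i` has fibres of size
`|S| / |G|`, and the fibre of the (at most one) constant `f i` is at most `|S|`; hence the right-hand
side is at most `|S| · (|S| / |G|)^(m-1)`, which rearranges to `|G|^(m-1) ≤ |S|`.
-/

open Finset

theorem Fintype.card_fiber_mul_card_eq_card {α β : Type*} [Fintype α] [Fintype β] [DecidableEq β]
    (f : α → β) (hf : ∀ b b', card {a // f a = b} = card {a // f a = b'}) (b : β) :
    card {a // f a = b} * card β = card α := by
  rw [← card_congr (Equiv.sigmaFiberEquiv f), card_sigma,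
    Finset.sum_congr rfl fun b' _ => hf b' b, sum_const, card_univ, smul_eq_mul, mul_comm]

theorem exists_forall_ne_not_of_pairwise_not_and {ι : Type*} [Nonempty ι] {P : ι → Prop}
    (hP : ∀ i j, i ≠ j → ¬(P i ∧ P j)) : ∃ i₀, ∀ i, i ≠ i₀ → ¬P i := by
  by_cases h : ∃ i₀, P i₀
  · obtain ⟨i₀, hi₀⟩ := h
    exact ⟨i₀, fun i hi hPi => hP i i₀ hi ⟨hPi, hi₀⟩⟩
  · simp only [not_exists] at h
    exact ⟨Classical.arbitrary ι, fun i _ => h i⟩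

theorem prod_mul_pow_card_sub_one_le {ι : Type*} [Fintype ι] [DecidableEq ι] {c : ι → ℕ}
    {g s : ℕ} (i₀ : ι) (hc₀ : c i₀ ≤ s) (hc : ∀ i, i ≠ i₀ → c i * g = s) :
    (∏ i, c i) * g ^ (Fintype.card ι - 1) ≤ s ^ Fintype.card ι := by
  have hrest :
      (∏ i ∈ univ.erase i₀, c i) * g ^ (Fintype.card ι - 1) = s ^ (Fintype.card ι - 1) := by
    rw [← card_univ, ← card_erase_of_mem (mem_univ i₀), ← prod_const, ← prod_mul_distrib,
      ← prod_const]
    exact prod_congr rfl fun i hi => hc i (ne_of_mem_erase hi)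
  calc (∏ i, c i) * g ^ (Fintype.card ι - 1)
      = c i₀ * s ^ (Fintype.card ι - 1) := by
        rw [← mul_prod_erase univ c (mem_univ i₀), mul_assoc, hrest]
    _ ≤ s * s ^ (Fintype.card ι - 1) := Nat.mul_le_mul_right _ hc₀
    _ = s ^ Fintype.card ι := by
        rw [← pow_succ', Nat.sub_add_cancel (Fintype.card_pos_iff.mpr ⟨i₀⟩)]

theorem min_message_size_counting_general (G : Type*) [Fintype G] [DecidableEq G]
    (S : Type*) [Fintype S] [Nonempty S]
    (m : ℕ) (f : Fin m → S → G)
    (hindep : ∀ x : Fin m → G,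
      (Fintype.card {s : S // ∀ i, f i s = x i} : ℚ) * (Fintype.card S : ℚ) ^ (m - 1) =
        ∏ i : Fin m, (Fintype.card {s : S // f i s = x i} : ℚ))
    (hunif : ∀ i : Fin m,
      (∀ g g' : G, Fintype.card {s : S // f i s = g} = Fintype.card {s : S // f i s = g'}) ∨
      (∃ c : G, ∀ s : S, f i s = c))
    (hone : ∀ i j : Fin m, i ≠ j →
      ¬((∃ c : G, ∀ s : S, f i s = c) ∧ (∃ c : G, ∀ s : S, f j s = c))) :
    Fintype.card G ^ (m - 1) ≤ Fintype.card S := by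
  rcases m.eq_zero_or_pos with rfl | hm
  · exact Fintype.card_pos (α := S)
  obtain ⟨s₀⟩ := ‹Nonempty S›
  set x : Fin m → G := fun i => f i s₀
  have : Nonempty (Fin m) := ⟨⟨0, hm⟩⟩
  obtain ⟨i₀, hi₀⟩ := exists_forall_ne_not_of_pairwise_not_and hone
  have hbound := prod_mul_pow_card_sub_one_le (c := fun i => Fintype.card {s : S // f i s = x i})
    (g := Fintype.card G) i₀ (Fintype.card_subtype_le _)
    fun i hi => Fintype.card_fiber_mul_card_eq_card _ ((hunif i).resolve_right (hi₀ i hi)) _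
  rw [Fintype.card_fin] at hbound
  have hjoint : 0 < Fintype.card {s : S // ∀ i, f i s = x i} :=
    Fintype.card_pos_iff.mpr ⟨⟨s₀, fun _ => rfl⟩⟩
  have hindep_x : Fintype.card {s : S // ∀ i, f i s = x i} * Fintype.card S ^ (m - 1) =
      ∏ i, Fintype.card {s : S // f i s = x i} := by
    exact_mod_cast hindep x
  refine le_of_mul_le_mul_left ?_ (pow_pos (Fintype.card_pos (α := S)) (m - 1))
  calc Fintype.card S ^ (m - 1) * Fintype.card G ^ (m - 1)
      ≤ Fintype.card {s : S // ∀ i, f i s = x i} * Fintype.card S ^ (m - 1) *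
          Fintype.card G ^ (m - 1) := by
        rw [mul_assoc _ (Fintype.card S ^ (m - 1))]
        exact Nat.le_mul_of_pos_left _ hjoint
    _ ≤ Fintype.card S ^ m := hindep_x ▸ hbound
    _ = Fintype.card S ^ (m - 1) * Fintype.card S := by rw [← pow_succ, Nat.sub_add_cancel hm]

/-- Counting core of the minimum-message-size converse: if `f₀, ..., f_{m-1} : S → G` are
mutually independent under the uniform distribution on `S`, each either uniform on the
finite abelian group `G` or constant, and at most one is constant, then
`|S| ≥ |G|^(m-1)`. -/
theorem min_message_size_counting (G : Type*) [AddCommGroup G] [Fintype G] [DecidableEq G]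
    (S : Type*) [Fintype S] [DecidableEq S] [Nonempty S]
    (m : ℕ) (f : Fin m → S → G)
    (hindep : ∀ x : Fin m → G,
      (Fintype.card {s : S // ∀ i, f i s = x i} : ℚ) * (Fintype.card S : ℚ) ^ (m - 1) =
        ∏ i : Fin m, (Fintype.card {s : S // f i s = x i} : ℚ))
    (hunif : ∀ i : Fin m,
      (∀ g g' : G, Fintype.card {s : S // f i s = g} = Fintype.card {s : S // f i s = g'}) ∨
      (∃ c : G, ∀ s : S, f i s = c))
    (hone : ∀ i j : Fin m, i ≠ j →
      ¬((∃ c : G, ∀ s : S, f i s = c) ∧ (∃ c : G, ∀ s : S, f j s = c))) :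
    Fintype.card G ^ (m - 1) ≤ Fintype.card S :=
  min_message_size_counting_general G S m f hindep hunif hone
end

section
/- For integers N ≥ 2 and K ≥ 2, N(K-1)·log₂ N < N·K·log₂(N^{K-1}! / N^{K-2}!); i.e., the upload cost of the proposed code is strictly smaller than that of the capacity-achieving code of Sun–Jafar with message size N^{K-1}. -/
/-- The upload cost `N(K-1)·log₂ N` of the proposed code is strictly smaller than the
upload cost `N·K·log₂(N^(K-1)!/N^(K-2)!)` of the capacity-achieving Sun–Jafar code with
message size `N^(K-1)`. -/
theorem pir_upload_cost_improvement (N K : ℕ) (hN : 2 ≤ N) (hK : 2 ≤ K) :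
    (N : ℝ) * ((K : ℝ) - 1) * Real.logb 2 (N : ℝ) <
      (N : ℝ) * (K : ℝ) *
        Real.logb 2 (((N ^ (K - 1)).factorial : ℝ) / ((N ^ (K - 2)).factorial : ℝ)) := by
  set a := N ^ (K - 1) with ha
  set b := N ^ (K - 2) with hb
  have hN1 : 1 < N := hN
  have hlt : b < a := by
    apply Nat.pow_lt_pow_right hN1
    omega
  have ha1 : 1 ≤ a := Nat.one_le_iff_ne_zero.mpr (by positivity)
  have hfac : a * b.factorial ≤ a.factorial := by
    calc a * b.factorial ≤ a * (a - 1).factorial := by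
          exact Nat.mul_le_mul_left a (Nat.factorial_le (by omega))
      _ = a.factorial := by
          rw [← Nat.succ_pred_eq_of_pos (by omega : 0 < a), Nat.factorial_succ]
          simp
  have hbpos : (0:ℝ) < (b.factorial : ℝ) := by positivity
  have hquot : (a : ℝ) ≤ (a.factorial : ℝ) / (b.factorial : ℝ) := by
    rw [le_div_iff₀ hbpos]
    exact_mod_cast hfac
  have hapos : (1:ℝ) ≤ (a : ℝ) := by exact_mod_cast ha1
  have hlog : Real.logb 2 (a : ℝ) ≤
      Real.logb 2 ((a.factorial : ℝ) / (b.factorial : ℝ)) :=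
    Real.logb_le_logb_of_le one_lt_two (by linarith) hquot
  have hloga : Real.logb 2 (a : ℝ) = (K - 1 : ℕ) * Real.logb 2 (N : ℝ) := by
    rw [ha]; push_cast [Real.logb_pow]; ring
  have hcast : ((K - 1 : ℕ) : ℝ) = (K : ℝ) - 1 := by
    have : (1:ℕ) ≤ K := by omega
    push_cast [this]; ring
  have hlogN : 0 < Real.logb 2 (N : ℝ) := by
    apply Real.logb_pos one_lt_two
    exact_mod_cast hN1
  have hKr : (2:ℝ) ≤ (K : ℝ) := by exact_mod_cast hK
  have hNr : (2:ℝ) ≤ (N : ℝ) := by exact_mod_cast hN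
  have hkey : ((K : ℝ) - 1) * Real.logb 2 (N : ℝ) ≤
      Real.logb 2 ((a.factorial : ℝ) / (b.factorial : ℝ)) := by
    calc ((K : ℝ) - 1) * Real.logb 2 (N : ℝ) = Real.logb 2 (a : ℝ) := by
          rw [hloga, hcast]
      _ ≤ _ := hlog
  calc (N : ℝ) * ((K : ℝ) - 1) * Real.logb 2 (N : ℝ)
      < (N : ℝ) * (K : ℝ) * (((K : ℝ) - 1) * Real.logb 2 (N : ℝ)) := by
        have h1 : (0:ℝ) < (N : ℝ) * (((K:ℝ) - 1) * Real.logb 2 (N:ℝ)) :=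
          mul_pos (by linarith) (mul_pos (by linarith) hlogN)
        nlinarith [mul_pos h1 (by linarith : (0:ℝ) < (K:ℝ) - 1)]
    _ ≤ (N : ℝ) * (K : ℝ) * Real.logb 2 ((a.factorial : ℝ) / (b.factorial : ℝ)) := by
        apply mul_le_mul_of_nonneg_left hkey
        positivity
end
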